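/- Let M, N : ℕ → ℝ be weight sequences in the class LC, with m_p := M_p/p! and n_p := N_p/p!. Then the following are equivalent: (i) there exist A ≥ 1, B ≥ 1 and C ≥ 1 such that for every λ ≥ 1 there exists D ≥ 1 with ω_N(λ·C·t) ≤ B·λ·ω_M(A·t) + D·λ for all t ≥ 0 (a mixed version of condition (α1)); (ii) there exist a positive integer C and B ≥ 1 such that for every positive integer λ there exists D ≥ 1 with λ·(M_p)^{1/p} ≤ B·D^{1/p}·(N_{λ·C·p})^{1/(λ·C·p)} for all p ≥ 1; (iii) there exist a positive integer C and A ≥ 1 such that for every positive integer λ there exists D ≥ 1 with (m_p)^{1/p} ≤ A·D^{1/p}·(n_{λ·C·p})^{1/(λ·C·p)} for all p ≥ 1. -/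

import Mathlib

/-!
(ii) ⟺ (iii) is a change of normalization: `p / e ≤ (p!)^{1/p} ≤ p`, so passing between
`M_p^{1/p}` and `m_p^{1/p}` costs a factor `p` up to the constant `e`, and on the `N`-side the
factor `q = λCp` absorbs the `λ` of (ii).

(i) ⟹ (ii): by log-convexity the supremum defining `ω_M(μ_{p+1})` is attained at the index `p`.
Evaluating (i) at `t = μ_{p+1}/A` and bounding `ω_N` from below by its `q`-th term,
`q = λ⌈B⌉p`, gives (ii) after dividing by `q`.

(ii) ⟹ (i): with `k = ⌈λ⌉`, write `j = kCp + r`, `r < kC`. Monotonicity of `N` and (ii) at `k`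
bound the `j`-th term of `ω_N(λt)` by `kC` times the `p`-th term of `ω_M(Bt)` plus
`kC·log(λtD)`, and `log(λt) ≤ λ + ω_M(Bt) + log M_1`.
-/

open Filter Real Asymptotics

/-- The associated weight function of a weight sequence `M`. -/
noncomputable def omegaM (M : ℕ → ℝ) (t : ℝ) : ℝ :=
  if t = 0 then 0 else ⨆ p : ℕ, Real.log (t ^ p / M p)

/-- The class `LC`: positive, normalized, log-convex weight sequences whose
`p`-th roots tend to infinity. -/
def IsLC (M : ℕ → ℝ) : Prop :=
  (∀ p, 0 < M p) ∧ M 0 = 1 ∧ M 0 ≤ M 1 ∧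
  (∀ p : ℕ, 1 ≤ p → (M p) ^ 2 ≤ M (p - 1) * M (p + 1)) ∧
  Filter.Tendsto (fun p : ℕ => (M p) ^ (1 / (p : ℝ))) Filter.atTop Filter.atTop

/-- The quotient sequence `μ_0 = 1`, `μ_p = M_p / M_{p-1}`. -/
noncomputable def mu (M : ℕ → ℝ) (p : ℕ) : ℝ :=
  if p = 0 then 1 else M p / M (p - 1)

/-- Moderate growth `(mg)`. -/
def HasMG (M : ℕ → ℝ) : Prop :=
  ∃ C : ℝ, 1 ≤ C ∧ ∀ p q : ℕ, M (p + q) ≤ C ^ (p + q) * M p * M q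

/-- `m_p := M_p / p!`. -/
noncomputable def mseq (M : ℕ → ℝ) (p : ℕ) : ℝ := M p / (Nat.factorial p)

/-- Young conjugate of `x ↦ ω_M(eˣ)`. -/
noncomputable def phiStar (M : ℕ → ℝ) (y : ℝ) : ℝ :=
  sSup ((fun x => x * y - omegaM M (Real.exp x)) '' Set.Ici (0 : ℝ))

/-- The weight matrix associated with `ω_M`: `M^{(l)}_p := exp((1/l)·φ*(l·p))`. -/
noncomputable def MMat (M : ℕ → ℝ) (l : ℝ) (p : ℕ) : ℝ :=
  Real.exp ((1 / l) * phiStar M (l * p))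

/-- `m^{(l)}_p := M^{(l)}_p / p!`. -/
noncomputable def mMat (M : ℕ → ℝ) (l : ℝ) (p : ℕ) : ℝ :=
  MMat M l p / (Nat.factorial p)

/-- The Roumieu root-almost-increasing condition `(M_{rai})` for the weight matrix
associated with `ω_M`. -/
def MRai (M : ℕ → ℝ) : Prop :=
  ∀ x : ℝ, 0 < x → ∃ C : ℝ, 0 < C ∧ ∃ y : ℝ, 0 < y ∧
    ∀ p q : ℕ, 1 ≤ p → p ≤ q →
      (mMat M x p) ^ (1 / (p : ℝ)) ≤ C * (mMat M y q) ^ (1 / (q : ℝ))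

/-- `M ≼ N` : `sup_{p ≥ 1} (M_p/N_p)^{1/p} < ∞`. -/
def Precsim (M N : ℕ → ℝ) : Prop :=
  ∃ A : ℝ, ∀ p : ℕ, 1 ≤ p → (M p / N p) ^ (1 / (p : ℝ)) ≤ A

/-- `M ≈ N` : mutual `≼`. -/
def Approx (M N : ℕ → ℝ) : Prop := Precsim M N ∧ Precsim N M

/-- Condition `(ω1)` for a weight function. -/
def Omega1 (w : ℝ → ℝ) : Prop :=
  ∃ L : ℝ, 1 ≤ L ∧ ∀ t : ℝ, 0 ≤ t → w (2 * t) ≤ L * (w t + 1)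

/-- Condition `(α0)` (in the rewritten form valid for all `t ≥ 0`). -/
def Alpha0 (w : ℝ → ℝ) : Prop :=
  ∃ C : ℝ, 1 ≤ C ∧ ∃ D : ℝ, 1 ≤ D ∧ ∀ lam : ℝ, 1 ≤ lam → ∀ t : ℝ, 0 ≤ t →
    w (lam * t) ≤ C * lam * w t + D * lam

lemma apply_le_apply_of_succ_le_of_le_succ {α : Type*} [Preorder α] {f : ℕ → α} {k : ℕ}
    (hdown : ∀ n < k, f (n + 1) ≤ f n) (hup : ∀ n ≥ k, f n ≤ f (n + 1)) (q : ℕ) :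
    f k ≤ f q := by
  rcases le_total k q with hkq | hqk
  · exact monotoneOn_nat_Ici_of_le_succ hup (Set.mem_ofPred.2 le_rfl) hkq hkq
  · exact Nat.decreasingInduction (motive := fun n _ => f k ≤ f n)
      (fun n hn ih => ih.trans (hdown n hn)) le_rfl hqk

lemma log_pow_div {t x : ℝ} (ht : 0 < t) (hx : 0 < x) (p : ℕ) :
    log (t ^ p / x) = p * log t - log x := by
  rw [log_div (pow_pos ht p).ne' hx.ne', log_pow]

lemma mul_rpow_le_mul_rpow_iff {a x b d y p k : ℝ} (ha : 0 < a) (hx : 0 < x) (hb : 0 < b)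
    (hd : 0 < d) (hy : 0 < y) (hp : 0 < p) (hk : 0 < k) :
    a * x ^ (1 / p) ≤ b * d ^ (1 / p) * y ^ (1 / (k * p)) ↔
      k * p * log a + k * log x ≤ k * p * log b + k * log d + log y := by
  rw [← log_le_log_iff (by positivity) (by positivity), log_mul ha.ne' (by positivity),
    log_mul (by positivity) (by positivity), log_mul hb.ne' (by positivity), log_rpow hx,
    log_rpow hd, log_rpow hy, ← mul_le_mul_iff_right₀ (mul_pos hk hp)]
  have hp0 := hp.ne'
  have hkp := (mul_pos hk hp).ne'
  rw [mul_add, mul_add, mul_add, ← mul_assoc, ← mul_assoc, ← mul_assoc, mul_one_div_cancel hkp,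
    one_mul, mul_one_div, mul_div_cancel_right₀ _ hp0]

lemma factorial_rpow_le {p : ℕ} (hp : p ≠ 0) : (p.factorial : ℝ) ^ (1 / (p : ℝ)) ≤ p :=
  calc (p.factorial : ℝ) ^ (1 / (p : ℝ)) ≤ ((p : ℝ) ^ p) ^ (1 / (p : ℝ)) := by
        gcongr; exact_mod_cast Nat.factorial_le_pow p
    _ = p := by rw [one_div, Real.pow_rpow_inv_natCast (Nat.cast_nonneg p) hp]

lemma div_exp_one_le_factorial_rpow {p : ℕ} (hp : p ≠ 0) :
    p / exp 1 ≤ (p.factorial : ℝ) ^ (1 / (p : ℝ)) := by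
  have hpow : ((p : ℝ) / exp 1) ^ p ≤ p.factorial := by
    have := Real.pow_div_factorial_le_exp (x := p) (Nat.cast_nonneg p) p
    rw [div_le_iff₀ (by positivity)] at this
    rw [div_pow, ← Real.exp_nat_mul, mul_one, div_le_iff₀ (by positivity)]
    linarith
  calc (p : ℝ) / exp 1 = (((p : ℝ) / exp 1) ^ p) ^ (1 / (p : ℝ)) := by
        rw [one_div, Real.pow_rpow_inv_natCast (by positivity) hp]
    _ ≤ (p.factorial : ℝ) ^ (1 / (p : ℝ)) := by gcongr

lemma mu_succ (M : ℕ → ℝ) (p : ℕ) : mu M (p + 1) = M (p + 1) / M p := by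
  simp [mu]

lemma omegaM_le_of_forall {M : ℕ → ℝ} (hM : ∀ p, 0 < M p) {t c : ℝ} (ht : 0 < t)
    (h : ∀ p : ℕ, p * log t - log (M p) ≤ c) : omegaM M t ≤ c := by
  rw [omegaM, if_neg ht.ne']
  exact ciSup_le fun p => (log_pow_div ht (hM p) p).trans_le (h p)

namespace IsLC

variable {M : ℕ → ℝ} (hM : IsLC M)
include hM

lemma pos (p : ℕ) : 0 < M p := hM.1 p

lemma apply_zero : M 0 = 1 := hM.2.1

lemma succ_eq_mu_mul (p : ℕ) : M (p + 1) = mu M (p + 1) * M p := by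
  rw [mu_succ, div_mul_cancel₀ _ (hM.pos p).ne']

lemma monotone_mu : Monotone (mu M) := by
  refine monotone_nat_of_le_succ fun p => ?_
  obtain ⟨hpos, h0, h01, hlc, -⟩ := hM
  rcases p with _ | p
  · simpa [mu, h0] using h01
  · specialize hlc (p + 1) (by omega)
    simp only [Nat.add_sub_cancel] at hlc
    rw [mu_succ, mu_succ, div_le_div_iff₀ (hpos _) (hpos _)]
    nlinarith

lemma one_le_mu (p : ℕ) : 1 ≤ mu M p := by
  simpa [mu] using hM.monotone_mu (Nat.zero_le p)

lemma mu_pos (p : ℕ) : 0 < mu M p := zero_lt_one.trans_le (hM.one_le_mu p)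

lemma monotone : Monotone M := by
  refine monotone_nat_of_le_succ fun p => ?_
  rw [hM.succ_eq_mu_mul]
  exact le_mul_of_one_le_left (hM.pos p).le (hM.one_le_mu _)

lemma one_le (p : ℕ) : 1 ≤ M p := hM.apply_zero ▸ hM.monotone (Nat.zero_le p)

lemma log_nonneg (p : ℕ) : 0 ≤ log (M p) := Real.log_nonneg (hM.one_le p)

-- With `u = μ_{p+1}`, consecutive terms of `q ↦ M_q / u^q` have ratio `μ_{q+1} / u`, which by
-- log-convexity is `≤ 1` for `q < p` and `≥ 1` for `q ≥ p`.
lemma div_pow_mu_le (p q : ℕ) :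
    M p / mu M (p + 1) ^ p ≤ M q / mu M (p + 1) ^ q := by
  set u := mu M (p + 1)
  have hu : 0 < u := hM.mu_pos _
  have hstep : ∀ n, M (n + 1) / u ^ (n + 1) = M n / u ^ n * (mu M (n + 1) / u) := by
    intro n
    rw [hM.succ_eq_mu_mul, pow_succ]
    field_simp
  refine apply_le_apply_of_succ_le_of_le_succ (f := fun q => M q / u ^ q) (fun n hn => ?_)
    (fun n hn => ?_) q
  · rw [hstep]
    refine mul_le_of_le_one_right (div_nonneg (hM.pos n).le (pow_pos hu n).le) ?_
    exact div_le_one_of_le₀ (hM.monotone_mu (by omega)) hu.le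
  · rw [hstep]
    refine le_mul_of_one_le_right (div_nonneg (hM.pos n).le (pow_pos hu n).le) ?_
    exact (one_le_div hu).2 (hM.monotone_mu (by omega))

lemma bddAbove_range_log {t : ℝ} (ht : 0 < t) :
    BddAbove (Set.range fun p : ℕ => log (t ^ p / M p)) := by
  obtain ⟨P, hP⟩ := eventually_atTop.mp
    ((hM.2.2.2.2.eventually_ge_atTop t).and (eventually_ge_atTop 1))
  obtain ⟨b, hb⟩ := ((Set.finite_Iio P).image fun p : ℕ => log (t ^ p / M p)).bddAbove
  refine ⟨max b 0, Set.forall_mem_range.2 fun p => ?_⟩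
  rcases lt_or_ge p P with hp | hp
  · exact le_max_of_le_left (hb ⟨p, hp, rfl⟩)
  · refine le_max_of_le_right (Real.log_nonpos (div_nonneg (pow_pos ht p).le (hM.pos p).le) ?_)
    obtain ⟨hroot, hp1⟩ := hP p hp
    rw [div_le_one (hM.pos p), ← Real.rpow_inv_natCast_pow (hM.pos p).le (n := p) (by omega),
      ← one_div]
    exact pow_le_pow_left₀ ht.le hroot p

lemma le_omegaM {t : ℝ} (ht : 0 < t) (p : ℕ) : p * log t - log (M p) ≤ omegaM M t := by
  rw [omegaM, if_neg ht.ne', ← log_pow_div ht (hM.pos p)]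
  exact le_ciSup (hM.bddAbove_range_log ht) p

lemma omegaM_nonneg {t : ℝ} (ht : 0 ≤ t) : 0 ≤ omegaM M t := by
  rcases ht.eq_or_lt with rfl | ht
  · simp [omegaM]
  · simpa [hM.apply_zero] using hM.le_omegaM ht 0

lemma omegaM_nonpos {t : ℝ} (ht0 : 0 ≤ t) (ht : t ≤ 1) : omegaM M t ≤ 0 := by
  rcases ht0.eq_or_lt with rfl | ht0
  · simp [omegaM]
  · refine omegaM_le_of_forall hM.pos ht0 fun p => ?_
    have := mul_nonpos_of_nonneg_of_nonpos (Nat.cast_nonneg p) (Real.log_nonpos ht0.le ht)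
    linarith [hM.log_nonneg p]

lemma omegaM_mu_le (p : ℕ) :
    omegaM M (mu M (p + 1)) ≤ p * log (mu M (p + 1)) - log (M p) := by
  have hu := hM.mu_pos (p + 1)
  refine omegaM_le_of_forall hM.pos hu fun q => ?_
  have h := hM.div_pow_mu_le p q
  rw [div_le_div_iff₀ (pow_pos hu p) (pow_pos hu q)] at h
  have hlog := Real.log_le_log (mul_pos (hM.pos p) (pow_pos hu q)) h
  rw [log_mul (hM.pos p).ne' (pow_pos hu q).ne', log_mul (hM.pos q).ne' (pow_pos hu p).ne',
    log_pow, log_pow] at hlog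
  linarith

end IsLC

section Mseq

variable {M : ℕ → ℝ} {p : ℕ}

lemma mseq_nonneg (hM : 0 ≤ M p) : 0 ≤ mseq M p := div_nonneg hM (Nat.cast_nonneg _)

lemma mseq_rpow (hM : 0 ≤ M p) :
    mseq M p ^ (1 / (p : ℝ)) = M p ^ (1 / (p : ℝ)) / (p.factorial : ℝ) ^ (1 / (p : ℝ)) :=
  Real.div_rpow hM (Nat.cast_nonneg _) _

lemma rpow_le_mul_mseq_rpow (hM : 0 ≤ M p) (hp : p ≠ 0) :
    M p ^ (1 / (p : ℝ)) ≤ p * mseq M p ^ (1 / (p : ℝ)) := by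
  have hfac : 0 < (p.factorial : ℝ) ^ (1 / (p : ℝ)) := by positivity
  rw [mseq_rpow hM, mul_div_assoc', le_div_iff₀ hfac, mul_comm]
  gcongr
  exact factorial_rpow_le hp

lemma mul_mseq_rpow_le (hM : 0 ≤ M p) (hp : p ≠ 0) :
    p * mseq M p ^ (1 / (p : ℝ)) ≤ exp 1 * M p ^ (1 / (p : ℝ)) := by
  have hfac : 0 < (p.factorial : ℝ) ^ (1 / (p : ℝ)) := by positivity
  have hp_le : (p : ℝ) ≤ exp 1 * (p.factorial : ℝ) ^ (1 / (p : ℝ)) :=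
    (div_le_iff₀' (exp_pos 1)).1 (div_exp_one_le_factorial_rpow hp)
  rw [mseq_rpow hM, mul_div_assoc', div_le_iff₀ hfac]
  calc (p : ℝ) * M p ^ (1 / (p : ℝ))
      ≤ exp 1 * (p.factorial : ℝ) ^ (1 / (p : ℝ)) * M p ^ (1 / (p : ℝ)) := by gcongr
    _ = _ := by ring

end Mseq

def MixedAlpha1 (M N : ℕ → ℝ) : Prop :=
  ∃ A : ℝ, 1 ≤ A ∧ ∃ B : ℝ, 1 ≤ B ∧ ∃ C : ℝ, 1 ≤ C ∧ ∀ lam : ℝ, 1 ≤ lam →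
    ∃ D : ℝ, 1 ≤ D ∧ ∀ t : ℝ, 0 ≤ t →
      omegaM N (lam * C * t) ≤ B * lam * omegaM M (A * t) + D * lam

def MixedRootBound (M N : ℕ → ℝ) : Prop :=
  ∃ C : ℕ, 1 ≤ C ∧ ∃ B : ℝ, 1 ≤ B ∧ ∀ lam : ℕ, 1 ≤ lam → ∃ D : ℝ, 1 ≤ D ∧
    ∀ p : ℕ, 1 ≤ p → (lam : ℝ) * (M p) ^ (1 / (p : ℝ)) ≤
      B * D ^ (1 / (p : ℝ)) * (N (lam * C * p)) ^ (1 / ((lam : ℝ) * C * p))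

def MixedFactorialRootBound (M N : ℕ → ℝ) : Prop :=
  ∃ C : ℕ, 1 ≤ C ∧ ∃ A : ℝ, 1 ≤ A ∧ ∀ lam : ℕ, 1 ≤ lam → ∃ D : ℝ, 1 ≤ D ∧
    ∀ p : ℕ, 1 ≤ p → (mseq M p) ^ (1 / (p : ℝ)) ≤
      A * D ^ (1 / (p : ℝ)) * (mseq N (lam * C * p)) ^ (1 / ((lam : ℝ) * C * p))

section FactorialRoot

variable {M N : ℕ → ℝ} (hM : ∀ p, 0 ≤ M p) (hN : ∀ p, 0 ≤ N p)
include hM hN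

lemma MixedRootBound.mixedFactorialRootBound (h : MixedRootBound M N) :
    MixedFactorialRootBound M N := by
  obtain ⟨C, hC, B, hB, h⟩ := h
  have hC1 : (1 : ℝ) ≤ C := by exact_mod_cast hC
  refine ⟨C, hC, exp 1 * B * C, ?_, fun lam hlam => ?_⟩
  · exact one_le_mul_of_one_le_of_one_le
      (one_le_mul_of_one_le_of_one_le (one_le_exp zero_le_one) hB) hC1
  obtain ⟨D, hD, h⟩ := h lam hlam
  refine ⟨D, hD, fun p hp => ?_⟩
  have hq : ((lam * C * p : ℕ) : ℝ) = lam * C * p := by push_cast; ring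
  have hN_le := rpow_le_mul_mseq_rpow (hN (lam * C * p)) (by positivity)
  rw [hq] at hN_le
  have hlamp : (0 : ℝ) < lam * p := by positivity
  refine le_of_mul_le_mul_left ?_ hlamp
  calc (lam * p : ℝ) * mseq M p ^ (1 / (p : ℝ))
      = lam * (p * mseq M p ^ (1 / (p : ℝ))) := by ring
    _ ≤ lam * (exp 1 * M p ^ (1 / (p : ℝ))) := by
      gcongr lam * ?_; exact mul_mseq_rpow_le (hM p) (by omega)
    _ = exp 1 * (lam * M p ^ (1 / (p : ℝ))) := by ring
    _ ≤ exp 1 * (B * D ^ (1 / (p : ℝ)) * N (lam * C * p) ^ (1 / ((lam : ℝ) * C * p))) := by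
      gcongr exp 1 * ?_; exact h p hp
    _ ≤ exp 1 * (B * D ^ (1 / (p : ℝ)) *
          ((lam * C * p : ℝ) * mseq N (lam * C * p) ^ (1 / ((lam : ℝ) * C * p)))) := by
      gcongr
    _ = (lam * p : ℝ) * (exp 1 * B * C * D ^ (1 / (p : ℝ)) *
          mseq N (lam * C * p) ^ (1 / ((lam : ℝ) * C * p))) := by ring

lemma MixedFactorialRootBound.mixedRootBound (h : MixedFactorialRootBound M N) :
    MixedRootBound M N := by
  obtain ⟨C, hC, A, hA, h⟩ := h
  have hC1 : (1 : ℝ) ≤ C := by exact_mod_cast hC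
  refine ⟨C, hC, A * exp 1, one_le_mul_of_one_le_of_one_le hA (one_le_exp zero_le_one),
    fun lam hlam => ?_⟩
  obtain ⟨D, hD, h⟩ := h lam hlam
  refine ⟨D, hD, fun p hp => ?_⟩
  have hq : ((lam * C * p : ℕ) : ℝ) = lam * C * p := by push_cast; ring
  have hN_le := mul_mseq_rpow_le (hN (lam * C * p)) (by positivity)
  rw [hq] at hN_le
  calc (lam : ℝ) * M p ^ (1 / (p : ℝ))
        ≤ lam * (p * mseq M p ^ (1 / (p : ℝ))) := by
          gcongr lam * ?_; exact rpow_le_mul_mseq_rpow (hM p) (by omega)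
    _ ≤ lam * (p * (A * D ^ (1 / (p : ℝ)) *
          mseq N (lam * C * p) ^ (1 / ((lam : ℝ) * C * p)))) := by
      gcongr lam * (p * ?_); exact h p hp
    _ = A * D ^ (1 / (p : ℝ)) *
          ((lam * 1 * p : ℝ) * mseq N (lam * C * p) ^ (1 / ((lam : ℝ) * C * p))) := by ring
    _ ≤ A * D ^ (1 / (p : ℝ)) *
          ((lam * C * p : ℝ) * mseq N (lam * C * p) ^ (1 / ((lam : ℝ) * C * p))) := by
      have := Real.rpow_nonneg (mseq_nonneg (hN (lam * C * p))) (1 / ((lam : ℝ) * C * p))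
      gcongr
    _ ≤ A * D ^ (1 / (p : ℝ)) * (exp 1 * N (lam * C * p) ^ (1 / ((lam : ℝ) * C * p))) := by
      gcongr
    _ = A * exp 1 * D ^ (1 / (p : ℝ)) * N (lam * C * p) ^ (1 / ((lam : ℝ) * C * p)) := by ring

end FactorialRoot

lemma MixedAlpha1.mixedRootBound {M N : ℕ → ℝ} (hM : IsLC M) (hN : IsLC N)
    (h : MixedAlpha1 M N) : MixedRootBound M N := by
  obtain ⟨A, hA, B, hB, C, hC, h⟩ := h
  refine ⟨⌈B⌉₊, Nat.ceil_pos.2 (by linarith), A, hA, fun lam hlam => ?_⟩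
  obtain ⟨D, hD, h⟩ := h lam (by exact_mod_cast hlam)
  refine ⟨exp D, one_le_exp (by linarith), fun p hp => ?_⟩
  have hup := hM.omegaM_mu_le p
  set K := ⌈B⌉₊
  set u := mu M (p + 1)
  have hu : 0 < u := hM.mu_pos _
  have hlam0 : (0 : ℝ) < lam := by exact_mod_cast hlam
  have hK : B ≤ K := Nat.le_ceil B
  rw [mul_rpow_le_mul_rpow_iff hlam0 (hM.pos p) (by linarith) (exp_pos D) (hN.pos _)
    (by positivity) (by positivity), log_exp]
  have hlow := hN.le_omegaM (t := lam * C * (u / A)) (by positivity) (lam * K * p)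
  have hα := h (u / A) (by positivity)
  rw [mul_div_cancel₀ _ (by positivity)] at hα
  have hE := (hM.omegaM_nonneg hu.le).trans hup
  have hBup := mul_le_mul_of_nonneg_left hup (by positivity : (0 : ℝ) ≤ B * lam)
  have hBK : B * lam * (p * log u - log (M p)) ≤ K * lam * (p * log u - log (M p)) := by
    gcongr
  have hDK : D * lam ≤ lam * K * D := by
    calc D * lam = lam * 1 * D := by ring
      _ ≤ lam * K * D := by gcongr; exact hB.trans hK
  have hlog : log (lam * C * (u / A)) = log lam + log C + log u - log A := by
    rw [log_mul (by positivity) (by positivity), log_mul (by positivity) (by positivity),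
      log_div hu.ne' (by positivity)]
    ring
  have hC0 : 0 ≤ lam * K * p * log C := mul_nonneg (by positivity) (Real.log_nonneg hC)
  push_cast at hlow
  rw [hlog] at hlow
  linarith

lemma omegaM_le_of_root_bound {M N : ℕ → ℝ} (hM : IsLC M) (hN : IsLC N) {K : ℕ} (hK : 0 < K)
    {a B D s t : ℝ} (ha : 0 < a) (hB : 0 < B) (hD : 1 ≤ D) (ht : 0 < t) (hs : 1 < s)
    (hst : s ≤ a * t)
    (h : ∀ p : ℕ, 1 ≤ p →
      K * p * log a + K * log (M p) ≤ K * p * log B + K * log D + log (N (K * p))) :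
    omegaM N s ≤ K * (omegaM M (B * t) + log s + log D) := by
  have hs0 : 0 < s := zero_lt_one.trans hs
  have hlogs : 0 < log s := Real.log_pos hs
  have hW := hM.omegaM_nonneg (by positivity : 0 ≤ B * t)
  have hlogD : 0 ≤ log D := Real.log_nonneg hD
  refine omegaM_le_of_forall hN.pos hs0 fun j => ?_
  set p := j / K
  have hjs : (j : ℝ) * log s ≤ K * p * log s + K * log s := by
    have hj : (j : ℝ) ≤ K * (p + 1) := by exact_mod_cast (Nat.lt_mul_div_succ j hK).le
    linarith [mul_le_mul_of_nonneg_right hj hlogs.le]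
  have hNj : log (N (K * p)) ≤ log (N j) :=
    log_le_log (hN.pos _) (hN.monotone (Nat.mul_div_le j K))
  have hKW : 0 ≤ K * omegaM M (B * t) := by positivity
  have hKD : 0 ≤ K * log D := by positivity
  rcases Nat.eq_zero_or_pos p with hp | hp
  · simp only [hp, Nat.cast_zero, mul_zero, zero_mul, zero_add] at hjs hNj
    linarith [hN.log_nonneg 0]
  · have hroot := h p hp
    have hωM := hM.le_omegaM (by positivity : 0 < B * t) p
    rw [log_mul hB.ne' ht.ne'] at hωM
    have hlog_st : log s ≤ log a + log t := by
      rw [← log_mul ha.ne' ht.ne']; exact log_le_log hs0 hst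
    have := mul_le_mul_of_nonneg_left hlog_st (by positivity : (0 : ℝ) ≤ K * p)
    have := mul_le_mul_of_nonneg_left hωM (by positivity : (0 : ℝ) ≤ K)
    linarith

lemma MixedRootBound.mixedAlpha1 {M N : ℕ → ℝ} (hM : IsLC M) (hN : IsLC N)
    (h : MixedRootBound M N) : MixedAlpha1 M N := by
  obtain ⟨C, hC, B, hB, h⟩ := h
  have hC1 : (1 : ℝ) ≤ C := by exact_mod_cast hC
  refine ⟨B, hB, 4 * C, by linarith, 1, le_rfl, fun lam hlam => ?_⟩
  set k := ⌈lam⌉₊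
  have hk : 1 ≤ k := Nat.ceil_pos.2 (by linarith)
  have hlamk : lam ≤ k := Nat.le_ceil lam
  have hk2 : (k : ℝ) ≤ 2 * lam := by linarith [Nat.ceil_lt_add_one (by linarith : 0 ≤ lam)]
  obtain ⟨D, hD, h⟩ := h k hk
  have hlogD : 0 ≤ log D := Real.log_nonneg hD
  have hlogM1 := hM.log_nonneg 1
  refine ⟨2 * C * (lam + log (M 1) + log D), by nlinarith, fun t ht => ?_⟩
  have hW := hM.omegaM_nonneg (by positivity : 0 ≤ B * t)
  rw [mul_one]
  rcases le_or_gt (lam * t) 1 with hs | hs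
  · exact (hN.omegaM_nonpos (by positivity) hs).trans (by positivity)
  have ht0 : 0 < t := pos_of_mul_pos_right (by linarith : 0 < lam * t) (by linarith)
  have hbound := omegaM_le_of_root_bound hM hN (K := k * C) (by positivity) (a := k) (B := B)
    (by positivity) (by linarith) hD ht0 hs (by gcongr) fun p hp => by
      have := (mul_rpow_le_mul_rpow_iff (by positivity) (hM.pos p) (by linarith) (by linarith)
        (hN.pos _) (by positivity) (by positivity)).1 (h p hp)
      push_cast
      exact this
  have hlog_s : log (lam * t) ≤ lam + omegaM M (B * t) + log (M 1) := by
    have h1 := hM.le_omegaM (by positivity : 0 < B * t) 1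
    rw [Nat.cast_one, one_mul] at h1
    have h2 : log t ≤ log (B * t) := log_le_log ht0 (by nlinarith)
    rw [log_mul (by linarith) ht0.ne']
    linarith [Real.log_le_sub_one_of_pos (by linarith : 0 < lam)]
  have hX : 0 ≤ omegaM M (B * t) + log (lam * t) + log D := by
    linarith [Real.log_pos hs]
  push_cast at hbound
  calc omegaM N (lam * t) ≤ k * C * (omegaM M (B * t) + log (lam * t) + log D) := hbound
    _ ≤ (2 * lam) * C * (omegaM M (B * t) + log (lam * t) + log D) := by gcongr
    _ ≤ (2 * lam) * C * (2 * omegaM M (B * t) + lam + log (M 1) + log D) := by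
      gcongr (2 * lam) * C * ?_; linarith
    _ = 4 * C * lam * omegaM M (B * t) + 2 * C * (lam + log (M 1) + log D) * lam := by ring

/-- Theorem 5.1: characterization of the mixed `(α1)` condition. -/
theorem stmt17 (M N : ℕ → ℝ) (hM : IsLC M) (hN : IsLC N) :
    List.TFAE [
      ∃ A : ℝ, 1 ≤ A ∧ ∃ B : ℝ, 1 ≤ B ∧ ∃ C : ℝ, 1 ≤ C ∧ ∀ lam : ℝ, 1 ≤ lam →
        ∃ D : ℝ, 1 ≤ D ∧ ∀ t : ℝ, 0 ≤ t →
          omegaM N (lam * C * t) ≤ B * lam * omegaM M (A * t) + D * lam,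
      ∃ C : ℕ, 1 ≤ C ∧ ∃ B : ℝ, 1 ≤ B ∧ ∀ lam : ℕ, 1 ≤ lam → ∃ D : ℝ, 1 ≤ D ∧
        ∀ p : ℕ, 1 ≤ p → (lam : ℝ) * (M p) ^ (1 / (p : ℝ)) ≤
          B * D ^ (1 / (p : ℝ)) * (N (lam * C * p)) ^ (1 / ((lam : ℝ) * C * p)),
      ∃ C : ℕ, 1 ≤ C ∧ ∃ A : ℝ, 1 ≤ A ∧ ∀ lam : ℕ, 1 ≤ lam → ∃ D : ℝ, 1 ≤ D ∧
        ∀ p : ℕ, 1 ≤ p → (mseq M p) ^ (1 / (p : ℝ)) ≤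
          A * D ^ (1 / (p : ℝ)) * (mseq N (lam * C * p)) ^ (1 / ((lam : ℝ) * C * p))] := by
  have hM0 p := (hM.pos p).le
  have hN0 p := (hN.pos p).le
  tfae_have 1 → 2 := MixedAlpha1.mixedRootBound hM hN
  tfae_have 2 → 1 := MixedRootBound.mixedAlpha1 hM hN
  tfae_have 2 → 3 := MixedRootBound.mixedFactorialRootBound hM0 hN0
  tfae_have 3 → 2 := MixedFactorialRootBound.mixedRootBound hM0 hN0
  tfae_finish
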